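/- arXiv:2508.09729 — 2 statements merged into one kernel-verified Lean document; each statement's English description precedes it below -/
import Mathlib

section
/- In the quantum torus algebra with generators X_{α₁}, X_{α₂} satisfying X_{α₁}X_{α₂} = q² X_{α₂}X_{α₁}, and with X_{α₁+α₂} := q^{-1} X_{α₁}X_{α₂}, the pentagon identity holds: Ψ(-X_{α₁})Ψ(-X_{α₂}) = Ψ(-X_{α₂})Ψ(-X_{α₁+α₂})Ψ(-X_{α₁}), where Ψ(x) = Σ_{d≥0} q^d x^d/(q²;q²)_d. -/
/-!
In the standard module all three operators are lower triangular, so the identity can be checked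
coefficient by coefficient. The coefficient of `v j` in degree `j + e` reduces it to
`Ψ(-q^{2(j+e)}) = ∏_{k<e} (1 + q^{2(j+k)+1}) Ψ(-q^{2j})`, which follows by iterating the
functional equation `Ψ(q²x) = (1 - qx) Ψ(x)`, together with Rothe's `q`-binomial theorem, which
expands that finite product as a sum over `a + b = e`, matching the product of the coefficients
of `Ψ(-X_{α₂})` and `Ψ(-X_{α₁+α₂})`.
-/

open scoped BigOperators

/-- The finite q-Pochhammer symbol `(q²;q²)_d = ∏_{k=0}^{d-1} (1 - q^{2k+2})`. -/
noncomputable def qfac (q : ℂ) (d : ℕ) : ℂ := ∏ k ∈ Finset.range d, (1 - q ^ (2 * k + 2))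

/-- `X_{α₁}` acting in the standard module (with basis indexed by `ℕ`, extended by zero):
the diagonal operator `v(n) ↦ q^{2n} v(n)`. -/
noncomputable def opX1 (q : ℂ) (v : ℕ → ℂ) : ℕ → ℂ := fun n => q ^ (2 * n) * v n

/-- `X_{α₂}` acting in the standard module: the shift operator `v(n) ↦ v(n-1)`. -/
def opX2 (v : ℕ → ℂ) : ℕ → ℂ := fun n => if n = 0 then 0 else v (n - 1)

/-- The operator `Ψ(-X_{α₁})`, where `Ψ(u) = Σ_{d≥0} q^d u^d/(q²;q²)_d`;
it acts diagonally by the scalar `Ψ(-q^{2n})`. -/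
noncomputable def PsiX1 (q : ℂ) (v : ℕ → ℂ) : ℕ → ℂ :=
  fun n => (∑' d : ℕ, q ^ d * (-q ^ (2 * n)) ^ d / qfac q d) * v n

/-- The operator `Ψ(-X_{α₂})`, acting by `v(n) ↦ Σ_{d≤n} (-1)^d q^d v(n-d)/(q²;q²)_d`. -/
noncomputable def PsiX2 (q : ℂ) (v : ℕ → ℂ) : ℕ → ℂ :=
  fun n => ∑ d ∈ Finset.range (n + 1), (-1) ^ d * q ^ d / qfac q d * v (n - d)

/-- The operator `Ψ(-X_{α₁+α₂})` for `X_{α₁+α₂} = q⁻¹ X_{α₁} X_{α₂}`. -/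
noncomputable def PsiX12 (q : ℂ) (v : ℕ → ℂ) : ℕ → ℂ :=
  fun n => ∑ d ∈ Finset.range (n + 1),
    (-1) ^ d * q ^ (d * (2 * n + 1 - d)) / qfac q d * v (n - d)

open Finset Filter Topology

lemma Finset.Nat.sum_antidiagonal_sum_antidiagonal {M : Type*} [AddCommMonoid M] (n : ℕ)
    (f : ℕ × ℕ → ℕ × ℕ → M) :
    ∑ p ∈ antidiagonal n, ∑ r ∈ antidiagonal p.2, f p r =
      ∑ p ∈ antidiagonal n, ∑ r ∈ antidiagonal p.1, f (r.1, r.2 + p.2) (r.2, p.2) := by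
  simp only [sum_sigma']
  apply sum_nbij' (fun x => ⟨(x.1.1 + x.2.1, x.2.2), (x.1.1, x.2.1)⟩)
    (fun x => ⟨(x.2.1, x.2.2 + x.1.2), (x.2.2, x.1.2)⟩) <;>
    aesop (add simp [add_assoc])

section QPochhammer

variable {q : ℂ}

lemma qfac_succ (q : ℂ) (d : ℕ) : qfac q (d + 1) = qfac q d * (1 - q ^ (2 * d + 2)) :=
  prod_range_succ _ _

lemma one_sub_pow_ne_zero_of_norm_lt_one (hq : ‖q‖ < 1) {k : ℕ} (hk : k ≠ 0) :
    1 - q ^ k ≠ 0 := by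
  refine sub_ne_zero.mpr fun h => (pow_lt_one₀ (norm_nonneg q) hq hk).ne ?_
  rw [← norm_pow, ← h, norm_one]

lemma qfac_ne_zero (hq : ‖q‖ < 1) (d : ℕ) : qfac q d ≠ 0 :=
  prod_ne_zero_iff.mpr fun _ _ => one_sub_pow_ne_zero_of_norm_lt_one hq (by omega)

lemma tendsto_norm_one_sub_pow_two_mul_add_two (hq : ‖q‖ < 1) :
    Tendsto (fun d : ℕ => ‖1 - q ^ (2 * d + 2)‖) atTop (𝓝 1) := by
  have h : Tendsto (fun d : ℕ => q ^ (2 * d + 2)) atTop (𝓝 0) :=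
    (tendsto_pow_atTop_nhds_zero_of_norm_lt_one hq).comp
      (tendsto_atTop_mono (fun d => show id d ≤ 2 * d + 2 by simp only [id]; omega) tendsto_id)
  simpa using (tendsto_const_nhds (x := (1 : ℂ))).sub h |>.norm

lemma summable_pow_div_qfac (hq : ‖q‖ < 1) {z : ℂ} (hz : ‖z‖ < 1) :
    Summable fun d => z ^ d / qfac q d := by
  obtain ⟨r, hzr, hr1⟩ := exists_between hz
  have hr0 : 0 < r := (norm_nonneg z).trans_lt hzr
  have hzr' : ‖z‖ / r < 1 := (div_lt_one hr0).mpr hzr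
  refine summable_of_ratio_norm_eventually_le hr1 ?_
  filter_upwards [(tendsto_norm_one_sub_pow_two_mul_add_two hq).eventually_const_lt hzr'] with d hd
  rw [qfac_succ, pow_succ, mul_div_mul_comm, norm_mul, mul_comm r]
  gcongr
  rw [norm_div]
  have := (div_lt_iff₀ hr0).mp hd
  exact div_le_of_le_mul₀ (norm_nonneg _) hr0.le (by linarith)

end QPochhammer

/-- Euler's `q²`-exponential; the quantum dilogarithm is `Ψ(x) = qexp q (q * x)`. -/
noncomputable def qexp (q z : ℂ) : ℂ := ∑' d, z ^ d / qfac q d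

section QExp

variable {q : ℂ}

lemma norm_pow_mul_lt_one (hq : ‖q‖ < 1) {z : ℂ} (hz : ‖z‖ < 1) (k : ℕ) :
    ‖q ^ k * z‖ < 1 := by
  refine lt_of_le_of_lt ?_ hz
  rw [norm_mul, norm_pow]
  exact mul_le_of_le_one_left (norm_nonneg z) (pow_le_one₀ (norm_nonneg q) hq.le)

lemma qexp_sq_mul (hq : ‖q‖ < 1) {z : ℂ} (hz : ‖z‖ < 1) :
    qexp q (q ^ 2 * z) = (1 - z) * qexp q z := by
  have hf := summable_pow_div_qfac hq hz
  have hg := summable_pow_div_qfac hq (norm_pow_mul_lt_one hq hz 2)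
  have hdiff : qexp q z - qexp q (q ^ 2 * z) = z * qexp q z := by
    rw [qexp, qexp, ← hf.tsum_sub hg, (hf.sub hg).tsum_eq_zero_add, ← tsum_mul_left]
    simp only [pow_zero, sub_self, zero_add]
    refine tsum_congr fun d => ?_
    have hd := one_sub_pow_ne_zero_of_norm_lt_one hq (k := 2 * d + 2) (by omega)
    have hfac := qfac_ne_zero hq (q := q) d
    rw [qfac_succ]
    field_simp
    ring
  linear_combination -hdiff

lemma qexp_pow_mul (hq : ‖q‖ < 1) {z : ℂ} (hz : ‖z‖ < 1) (e : ℕ) :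
    qexp q (q ^ (2 * e) * z) = (∏ k ∈ range e, (1 - q ^ (2 * k) * z)) * qexp q z := by
  induction e with
  | zero => simp
  | succ e ih =>
    rw [show q ^ (2 * (e + 1)) * z = q ^ 2 * (q ^ (2 * e) * z) by ring,
      qexp_sq_mul hq (norm_pow_mul_lt_one hq hz _), ih, prod_range_succ]
    ring

end QExp

/-- `(q²;q²)_e * rotheSum q x e = Σ_b [e choose b]_{q²} q^{b²} x^b`. -/
noncomputable def rotheSum (q x : ℂ) (e : ℕ) : ℂ :=
  ∑ p ∈ antidiagonal e, q ^ (p.2 ^ 2) * x ^ p.2 / (qfac q p.1 * qfac q p.2)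

section Rothe

variable {q : ℂ}

lemma one_sub_mul_rotheSum_succ (hq : ‖q‖ < 1) (x : ℂ) (e : ℕ) :
    (1 - q ^ (2 * e + 2)) * rotheSum q x (e + 1) =
      (1 + x * q ^ (2 * e + 1)) * rotheSum q x e := by
  set T : ℕ × ℕ → ℂ := fun p => q ^ (p.2 ^ 2) * x ^ p.2 / (qfac q p.1 * qfac q p.2)
  have hsplit : ∀ p ∈ antidiagonal (e + 1),
      (1 - q ^ (2 * e + 2)) * T p =
        (1 - q ^ (2 * p.1)) * T p + q ^ (2 * p.1) * ((1 - q ^ (2 * p.2)) * T p) := by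
    rintro ⟨a, b⟩ hab
    rw [HasAntidiagonal.mem_antidiagonal] at hab
    rw [show 2 * e + 2 = 2 * a + 2 * b by omega, pow_add]
    ring
  have hfst : ∑ p ∈ antidiagonal (e + 1), (1 - q ^ (2 * p.1)) * T p = rotheSum q x e := by
    rw [Nat.sum_antidiagonal_succ]
    simp only [mul_zero, pow_zero, sub_self, zero_mul, zero_add]
    refine sum_congr rfl fun p _ => ?_
    have := one_sub_pow_ne_zero_of_norm_lt_one hq (k := 2 * p.1 + 2) (by omega)
    have := qfac_ne_zero hq (q := q) p.1
    have := qfac_ne_zero hq (q := q) p.2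
    simp only [T, qfac_succ]
    field_simp
    ring
  have hsnd : ∑ p ∈ antidiagonal (e + 1), q ^ (2 * p.1) * ((1 - q ^ (2 * p.2)) * T p) =
      x * q ^ (2 * e + 1) * rotheSum q x e := by
    rw [Nat.sum_antidiagonal_succ', rotheSum, mul_sum]
    simp only [mul_zero, pow_zero, sub_self, zero_mul, mul_zero, zero_add]
    refine sum_congr rfl fun p hp => ?_
    rw [HasAntidiagonal.mem_antidiagonal] at hp
    have := one_sub_pow_ne_zero_of_norm_lt_one hq (k := 2 * p.2 + 2) (by omega)
    have := qfac_ne_zero hq (q := q) p.1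
    have := qfac_ne_zero hq (q := q) p.2
    simp only [T, qfac_succ]
    field_simp
    rw [← hp]
    ring
  rw [rotheSum, mul_sum, sum_congr rfl hsplit, sum_add_distrib, hfst, hsnd]
  ring

theorem prod_one_add_mul_pow_eq_qfac_mul_rotheSum (hq : ‖q‖ < 1) (x : ℂ) (e : ℕ) :
    ∏ k ∈ range e, (1 + x * q ^ (2 * k + 1)) = qfac q e * rotheSum q x e := by
  induction e with
  | zero => simp [qfac, rotheSum]
  | succ e ih =>
    rw [prod_range_succ, ih, qfac_succ]
    linear_combination -qfac q e * one_sub_mul_rotheSum_succ hq x e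

end Rothe

lemma opX1_opX2 (q : ℂ) (v : ℕ → ℂ) :
    opX1 q (opX2 v) = fun n => q ^ 2 * opX2 (opX1 q v) n := by
  funext n
  cases n with
  | zero => simp [opX1, opX2]
  | succ n =>
    simp only [opX1, opX2, Nat.succ_ne_zero, if_false, Nat.add_sub_cancel]
    ring

lemma PsiX1_apply (q : ℂ) (v : ℕ → ℂ) (n : ℕ) :
    PsiX1 q v n = qexp q (-q ^ (2 * n + 1)) * v n := by
  rw [PsiX1, qexp]
  congr 1
  exact tsum_congr fun d => by ring

lemma PsiX2_apply (q : ℂ) (v : ℕ → ℂ) (n : ℕ) :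
    PsiX2 q v n = ∑ p ∈ antidiagonal n, (-q) ^ p.1 / qfac q p.1 * v p.2 := by
  rw [PsiX2, Nat.sum_antidiagonal_eq_sum_range_succ_mk]
  simp only [neg_pow q]

lemma PsiX12_apply (q : ℂ) (v : ℕ → ℂ) (n : ℕ) :
    PsiX12 q v n = ∑ p ∈ antidiagonal n,
      (-q) ^ p.1 * q ^ (p.1 ^ 2) * (q ^ (2 * p.2)) ^ p.1 / qfac q p.1 * v p.2 := by
  rw [PsiX12, Nat.sum_antidiagonal_eq_sum_range_succ_mk]
  refine sum_congr rfl fun d hd => ?_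
  obtain ⟨j, rfl⟩ : ∃ j, n = d + j := ⟨n - d, by rw [mem_range] at hd; omega⟩
  rw [show 2 * (d + j) + 1 - d = d + 2 * j + 1 by omega, Nat.add_sub_cancel_left]
  ring

lemma pentagon_identity_coeff {q : ℂ} (hq : ‖q‖ < 1) (e j : ℕ) :
    qexp q (-q ^ (2 * (e + j) + 1)) * ((-q) ^ e / qfac q e) =
      (∑ p ∈ antidiagonal e, (-q) ^ p.1 / qfac q p.1 *
        ((-q) ^ p.2 * q ^ (p.2 ^ 2) * (q ^ (2 * j)) ^ p.2 / qfac q p.2)) *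
      qexp q (-q ^ (2 * j + 1)) := by
  have hz : ‖-q ^ (2 * j + 1)‖ < 1 := by
    rw [norm_neg, norm_pow]
    exact pow_lt_one₀ (norm_nonneg q) hq (by omega)
  have hsum : ∑ p ∈ antidiagonal e, (-q) ^ p.1 / qfac q p.1 *
      ((-q) ^ p.2 * q ^ (p.2 ^ 2) * (q ^ (2 * j)) ^ p.2 / qfac q p.2) =
      (-q) ^ e * rotheSum q (q ^ (2 * j)) e := by
    rw [rotheSum, mul_sum]
    refine sum_congr rfl fun p hp => ?_
    rw [HasAntidiagonal.mem_antidiagonal] at hp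
    rw [← hp, pow_add]
    ring
  have hshift : qexp q (-q ^ (2 * (e + j) + 1)) =
      qfac q e * rotheSum q (q ^ (2 * j)) e * qexp q (-q ^ (2 * j + 1)) := by
    rw [show -q ^ (2 * (e + j) + 1) = q ^ (2 * e) * -q ^ (2 * j + 1) by ring,
      qexp_pow_mul hq hz, ← prod_one_add_mul_pow_eq_qfac_mul_rotheSum hq]
    congr 1
    exact prod_congr rfl fun k _ => by ring
  have := qfac_ne_zero hq e
  rw [hsum, hshift]
  field_simp

theorem pentagon_identity_general (q : ℂ) (hq : ‖q‖ < 1) :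
    (∀ v : ℕ → ℂ, opX1 q (opX2 v) = fun n => q ^ 2 * opX2 (opX1 q v) n) ∧
    (∀ v : ℕ → ℂ, PsiX1 q (PsiX2 q v) = PsiX2 q (PsiX12 q (PsiX1 q v))) := by
  refine ⟨opX1_opX2 q, fun v => funext fun n => ?_⟩
  simp only [PsiX1_apply, PsiX2_apply, PsiX12_apply, mul_sum]
  rw [Nat.sum_antidiagonal_sum_antidiagonal]
  refine sum_congr rfl fun p hp => ?_
  rw [HasAntidiagonal.mem_antidiagonal] at hp
  rw [← hp, ← mul_assoc, pentagon_identity_coeff hq, mul_assoc, sum_mul]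
  exact sum_congr rfl fun r _ => by ring

/-- In the quantum torus with `X_{α₁} X_{α₂} = q² X_{α₂} X_{α₁}` (realized faithfully on the
standard module, as recorded by the first conjunct), the pentagon identity
`Ψ(-X_{α₁})Ψ(-X_{α₂}) = Ψ(-X_{α₂})Ψ(-X_{α₁+α₂})Ψ(-X_{α₁})` holds (second conjunct),
where `X_{α₁+α₂} = q⁻¹ X_{α₁} X_{α₂}`. -/
theorem pentagon_identity (q : ℂ) (hq : ‖q‖ < 1) (hq0 : q ≠ 0) :
    (∀ v : ℕ → ℂ, opX1 q (opX2 v) = fun n => q ^ 2 * opX2 (opX1 q v) n) ∧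
    (∀ v : ℕ → ℂ, PsiX1 q (PsiX2 q v) = PsiX2 q (PsiX12 q (PsiX1 q v))) :=
  pentagon_identity_general q hq
end

section
/- The Schur index of the A₂ Argyres–Douglas theory, given by I = (q²;q²)_∞² Σ_{l₁,l₂≥0} q^{2l₁+2l₂+2l₁l₂} / ((q²;q²)_{l₁}² (q²;q²)_{l₂}²), equals the specialized generating series of the four-node symmetric quiver with adjacency matrix [[0,1,1,0],[1,0,0,1],[1,0,1,0],[0,1,0,1]]: I = Σ_{l₁,l₂,m,n≥0} (-q)^{m²+n²+2ml₁+2nl₂+2l₁l₂} q^{2l₁+2l₂+m+n} / ((q²;q²)_{l₁}(q²;q²)_{l₂}(q²;q²)_m(q²;q²)_n). -/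
/-!
Write `S(x) = Σ_k (-1)^k q^{k(k-1)} xᵏ / (q²;q²)_k`. Comparing coefficients gives the functional
equation `S(x) = (1 - x) S(q²x)`; iterating it `N` times and using `S(q^{2N}x) → S(0) = 1` yields
Euler's identity `∏_j (1 - x q^{2j}) = S(x)`. At `x = q^{2l+2}` it reads
`(q²;q²)_∞ / (q²;q²)_l = Σ_m (-1)^m q^{m²+m+2lm} / (q²;q²)_m`. Substituting this for both factors
`(q²;q²)_∞ / (q²;q²)_{lᵢ}` of the Schur index and multiplying out gives the quiver summand term by
term, because `m² ≡ m (mod 2)` turns `(-1)^m` into the sign of `(-q)^{m²}`. The quadruple series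
converges absolutely since `|(q²;q²)_d|` is bounded below uniformly in `d`.
-/

open scoped BigOperators

open Finset Filter Topology

section

variable {q : ℂ}

lemma qfac_zero (q : ℂ) : qfac q 0 = 1 := prod_range_zero _

lemma norm_pow_le_of_le (hq : ‖q‖ < 1) {a b : ℕ} (hab : a ≤ b) : ‖q ^ b‖ ≤ ‖q‖ ^ a := by
  rw [norm_pow]
  exact pow_le_pow_of_le_one (norm_nonneg q) hq.le hab

lemma one_sub_pow_ne_zero (hq : ‖q‖ < 1) {n : ℕ} (hn : n ≠ 0) : 1 - q ^ n ≠ 0 := by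
  intro h
  have hlt : ‖q ^ n‖ < 1 := norm_pow q n ▸ pow_lt_one₀ (norm_nonneg q) hq hn
  rw [← sub_eq_zero.mp h, norm_one] at hlt
  exact lt_irrefl 1 hlt

lemma summable_norm_mul_pow_two_mul (hq : ‖q‖ < 1) (x : ℂ) :
    Summable fun j : ℕ => ‖x * q ^ (2 * j)‖ := by
  have hq2 : ‖q‖ ^ 2 < 1 := pow_lt_one₀ (norm_nonneg q) hq two_ne_zero
  simpa [pow_mul] using (summable_geometric_of_lt_one (by positivity) hq2).mul_left ‖x‖

lemma multipliable_one_sub_mul_pow_two_mul (hq : ‖q‖ < 1) (x : ℂ) :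
    Multipliable fun j : ℕ => 1 - x * q ^ (2 * j) := by
  simpa only [sub_eq_add_neg] using multipliable_one_add_of_summable
    (f := fun j : ℕ => -(x * q ^ (2 * j))) (by simpa using summable_norm_mul_pow_two_mul hq x)

-- The `qfac q d` converge to the nonzero product `(q²;q²)_∞`, so they stay away from `0`.
lemma exists_pos_le_norm_qfac (hq : ‖q‖ < 1) : ∃ c > 0, ∀ d, c ≤ ‖qfac q d‖ := by
  have hfactor : ∀ k : ℕ, 1 - q ^ (2 * k + 2) = 1 + -(q ^ 2 * q ^ (2 * k)) := fun k => by ring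
  have hlim : Tendsto (fun d => ‖qfac q d‖) atTop (𝓝 ‖∏' k : ℕ, (1 - q ^ (2 * k + 2))‖) := by
    simp only [hfactor, ← sub_eq_add_neg, qfac]
    exact (multipliable_one_sub_mul_pow_two_mul hq (q ^ 2)).hasProd.tendsto_prod_nat.norm
  have hprod : ∏' k : ℕ, (1 - q ^ (2 * k + 2)) ≠ 0 := by
    simp only [hfactor]
    refine tprod_one_add_ne_zero_of_summable (fun k => ?_) ?_
    · rw [← hfactor]
      exact one_sub_pow_ne_zero hq (by omega)
    · simpa only [norm_neg] using summable_norm_mul_pow_two_mul hq (q ^ 2)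
  obtain ⟨c, hcK, hmin⟩ :=
    hlim.isCompact_insert_range.exists_isMinOn (Set.insert_nonempty _ _) continuousOn_id
  refine ⟨c, ?_, fun d => hmin (Set.mem_insert_of_mem _ ⟨d, rfl⟩)⟩
  rcases hcK with rfl | ⟨d, rfl⟩
  · exact norm_pos_iff.2 hprod
  · exact norm_pos_iff.2 (qfac_ne_zero hq d)


noncomputable def eulerTerm (q x : ℂ) (k : ℕ) : ℂ :=
  (-1) ^ k * q ^ (k * (k - 1)) * x ^ k / qfac q k

lemma eulerTerm_zero (q x : ℂ) : eulerTerm q x 0 = 1 := by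
  simp [eulerTerm, qfac_zero]

lemma eulerTerm_mul (q y x : ℂ) (k : ℕ) : eulerTerm q (y * x) k = y ^ k * eulerTerm q x k := by
  simp only [eulerTerm, mul_pow]
  ring

lemma eulerTerm_succ (hq : ‖q‖ < 1) (x : ℂ) (k : ℕ) :
    eulerTerm q x (k + 1) = eulerTerm q (q ^ 2 * x) (k + 1) - x * eulerTerm q (q ^ 2 * x) k := by
  have hexp : (k + 1) * (k + 1 - 1) = k * (k - 1) + 2 * k := by
    cases k
    · rfl
    · simp only [Nat.add_sub_cancel]
      ring
  have hk := qfac_ne_zero hq k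
  have hk' := one_sub_pow_ne_zero hq (n := 2 * k + 2) (by omega)
  simp only [eulerTerm, qfac_succ, hexp, mul_pow]
  field_simp
  ring

lemma summable_norm_eulerTerm (hq : ‖q‖ < 1) (x : ℂ) : Summable fun k => ‖eulerTerm q x k‖ := by
  obtain ⟨c, hc, hle⟩ := exists_pos_le_norm_qfac hq
  have hsmall : ∀ᶠ k in atTop, ‖x * q ^ (k - 1)‖ ≤ 1 / 2 := by
    have h : Tendsto (fun k => x * q ^ (k - 1)) atTop (𝓝 0) := by
      simpa using ((tendsto_pow_atTop_nhds_zero_of_norm_lt_one hq).comp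
        (tendsto_sub_atTop_nat 1)).const_mul x
    exact h.norm.eventually_le_const (by norm_num)
  refine .of_norm_bounded_eventually_nat (summable_geometric_two.mul_left c⁻¹) ?_
  filter_upwards [hsmall] with k hk
  calc ‖‖eulerTerm q x k‖‖ = ‖x * q ^ (k - 1)‖ ^ k / ‖qfac q k‖ := by
        simp only [norm_norm, eulerTerm, norm_div, norm_mul, norm_pow, norm_neg, norm_one, one_pow,
          one_mul, mul_pow, ← pow_mul]
        ring
    _ ≤ (1 / 2) ^ k / c := by gcongr; exact hle k
    _ = c⁻¹ * (1 / 2) ^ k := by ring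

lemma tsum_eulerTerm_eq_one_sub_mul (hq : ‖q‖ < 1) (x : ℂ) :
    ∑' k, eulerTerm q x k = (1 - x) * ∑' k, eulerTerm q (q ^ 2 * x) k := by
  have hs := (summable_norm_eulerTerm hq (q ^ 2 * x)).of_norm
  rw [(summable_norm_eulerTerm hq x).of_norm.tsum_eq_zero_add, tsum_congr (eulerTerm_succ hq x),
    ((summable_nat_add_iff 1).2 hs).tsum_sub (hs.mul_left x), tsum_mul_left,
    hs.tsum_eq_zero_add, eulerTerm_zero, eulerTerm_zero]
  ring

lemma tsum_eulerTerm_eq_prod_mul (hq : ‖q‖ < 1) (x : ℂ) (N : ℕ) :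
    ∑' k, eulerTerm q x k =
      (∏ j ∈ range N, (1 - x * q ^ (2 * j))) * ∑' k, eulerTerm q (q ^ (2 * N) * x) k := by
  induction N with
  | zero => simp
  | succ N ih =>
    rw [ih, tsum_eulerTerm_eq_one_sub_mul hq, prod_range_succ, ← mul_assoc, ← mul_assoc,
      mul_comm (q ^ (2 * N)) x, ← pow_add, add_comm 2, mul_add_one]

lemma tendsto_tsum_eulerTerm_pow_mul (hq : ‖q‖ < 1) (x : ℂ) :
    Tendsto (fun N : ℕ => ∑' k, eulerTerm q (q ^ (2 * N) * x) k) atTop (𝓝 1) := by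
  have hpow : Tendsto (fun N : ℕ => q ^ (2 * N)) atTop (𝓝 0) := by
    simpa only [pow_mul] using tendsto_pow_atTop_nhds_zero_of_norm_lt_one
      (norm_pow q 2 ▸ pow_lt_one₀ (norm_nonneg q) hq two_ne_zero)
  have hterm (k : ℕ) : Tendsto (fun N : ℕ => eulerTerm q (q ^ (2 * N) * x) k) atTop
      (𝓝 (0 ^ k * eulerTerm q x k)) := by
    simpa only [eulerTerm_mul] using (hpow.pow k).mul_const (eulerTerm q x k)
  have hbound (N k : ℕ) : ‖eulerTerm q (q ^ (2 * N) * x) k‖ ≤ ‖eulerTerm q x k‖ := by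
    rw [eulerTerm_mul, norm_mul, norm_pow]
    refine mul_le_of_le_one_left (norm_nonneg _) (pow_le_one₀ (norm_nonneg _) ?_)
    simpa using norm_pow_le_of_le hq (Nat.zero_le (2 * N))
  have h := tendsto_tsum_of_dominated_convergence (summable_norm_eulerTerm hq x) hterm
    (Eventually.of_forall hbound)
  rwa [tsum_eq_single 0 fun k hk => by rw [zero_pow hk, zero_mul], pow_zero, one_mul,
    eulerTerm_zero] at h

theorem hasProd_one_sub_mul_pow_two_mul (hq : ‖q‖ < 1) (x : ℂ) :
    HasProd (fun j : ℕ => 1 - x * q ^ (2 * j)) (∑' k, eulerTerm q x k) := by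
  have hmul := multipliable_one_sub_mul_pow_two_mul hq x
  have h := hmul.hasProd.tendsto_prod_nat.mul (tendsto_tsum_eulerTerm_pow_mul hq x)
  simp only [← tsum_eulerTerm_eq_prod_mul hq x, mul_one] at h
  rw [tendsto_const_nhds_iff.mp h]
  exact hmul.hasProd

lemma tprod_one_sub_pow_div_qfac (hq : ‖q‖ < 1) (l : ℕ) :
    (∏' j : ℕ, (1 - q ^ (2 * (j + 1)))) / qfac q l = ∑' m, eulerTerm q (q ^ (2 * l + 2)) m := by
  have h := hasProd_one_sub_mul_pow_two_mul hq (q ^ (2 * l + 2))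
  have htail : (fun j : ℕ => 1 - q ^ (2 * l + 2) * q ^ (2 * j)) =
      fun j => 1 - q ^ (2 * (j + l + 1)) := funext fun j => by ring
  rw [htail] at h
  rw [← Multipliable.prod_mul_tprod_nat_mul' (f := fun j : ℕ => 1 - q ^ (2 * (j + 1)))
    h.multipliable, h.tprod_eq, div_eq_iff (qfac_ne_zero hq l), mul_comm]
  exact congrArg (_ * ·) (prod_congr rfl fun j _ => by ring)

noncomputable def quiverTerm (q : ℂ) (p : ℕ × ℕ × ℕ × ℕ) : ℂ :=
  (-q) ^ (p.2.2.1 ^ 2 + p.2.2.2 ^ 2 + 2 * p.2.2.1 * p.1 + 2 * p.2.2.2 * p.2.1 + 2 * p.1 * p.2.1) *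
    q ^ (2 * p.1 + 2 * p.2.1 + p.2.2.1 + p.2.2.2) /
    (qfac q p.1 * qfac q p.2.1 * qfac q p.2.2.1 * qfac q p.2.2.2)

lemma summable_quiverTerm (hq : ‖q‖ < 1) : Summable (quiverTerm q) := by
  obtain ⟨c, hc, hle⟩ := exists_pos_le_norm_qfac hq
  have hg := summable_geometric_of_lt_one (norm_nonneg q) hq
  have hg4 : Summable fun p : ℕ × ℕ × ℕ × ℕ =>
      ‖q‖ ^ p.1 * (‖q‖ ^ p.2.1 * (‖q‖ ^ p.2.2.1 * ‖q‖ ^ p.2.2.2)) :=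
    hg.mul_of_nonneg (hg.mul_of_nonneg (hg.mul_of_nonneg hg (fun _ => by positivity)
      (fun _ => by positivity)) (fun _ => by positivity) (fun _ => by positivity))
      (fun _ => by positivity) (fun _ => by positivity)
  refine .of_norm_bounded (hg4.mul_left (c ^ 4)⁻¹) fun ⟨l₁, l₂, m, n⟩ => ?_
  have hnum : ‖(-q) ^ (m ^ 2 + n ^ 2 + 2 * m * l₁ + 2 * n * l₂ + 2 * l₁ * l₂) *
      q ^ (2 * l₁ + 2 * l₂ + m + n)‖ ≤ ‖q‖ ^ (l₁ + l₂ + m + n) := by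
    rw [norm_mul, ← one_mul (‖q‖ ^ _)]
    exact mul_le_mul (by simpa [norm_pow] using pow_le_one₀ (norm_nonneg q) hq.le)
      (norm_pow_le_of_le hq (by omega)) (norm_nonneg _) zero_le_one
  have hden : c ^ 4 ≤ ‖qfac q l₁ * qfac q l₂ * qfac q m * qfac q n‖ := by
    simp only [norm_mul]
    calc c ^ 4 = c * c * c * c := by ring
      _ ≤ _ := by gcongr <;> exact hle _
  calc ‖quiverTerm q (l₁, l₂, m, n)‖ ≤ ‖q‖ ^ (l₁ + l₂ + m + n) / c ^ 4 := by
        rw [quiverTerm, norm_div]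
        exact div_le_div₀ (by positivity) hnum (by positivity) hden
    _ = _ := by simp only [pow_add]; ring

lemma quiverTerm_eq (q : ℂ) (l₁ l₂ : ℕ) (k : ℕ × ℕ) :
    quiverTerm q (l₁, l₂, k) =
      q ^ (2 * l₁ + 2 * l₂ + 2 * l₁ * l₂) / (qfac q l₁ * qfac q l₂) *
        (eulerTerm q (q ^ (2 * l₁ + 2)) k.1 * eulerTerm q (q ^ (2 * l₂ + 2)) k.2) := by
  obtain ⟨m, n⟩ := k
  have hsq (a : ℕ) : a ^ 2 = a * (a - 1) + a := by
    cases a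
    · rfl
    · rw [Nat.add_sub_cancel]
      ring
  have hsign : (-q) ^ (m ^ 2 + n ^ 2 + 2 * m * l₁ + 2 * n * l₂ + 2 * l₁ * l₂) =
      q ^ (m * (m - 1)) * q ^ (n * (n - 1)) * q ^ (2 * (m * l₁ + n * l₂ + l₁ * l₂)) *
        ((-1) ^ m * q ^ m) * ((-1) ^ n * q ^ n) := by
    rw [hsq m, hsq n, show m * (m - 1) + m + (n * (n - 1) + n) + 2 * m * l₁ + 2 * n * l₂ +
        2 * l₁ * l₂ = m * (m - 1) + n * (n - 1) + 2 * (m * l₁ + n * l₂ + l₁ * l₂) + m + n by ring,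
      pow_add, pow_add, pow_add, pow_add, m.even_mul_pred_self.neg_pow,
      n.even_mul_pred_self.neg_pow, (even_two_mul _).neg_pow, neg_pow q m, neg_pow q n]
  rw [quiverTerm, hsign]
  simp only [eulerTerm]
  ring

end

/-- The Schur index of the `A₂` Argyres–Douglas theory,
`(q²;q²)_∞² Σ_{l₁,l₂} q^{2l₁+2l₂+2l₁l₂}/((q²;q²)_{l₁}²(q²;q²)_{l₂}²)`, equals the
specialized generating series of the four-node symmetric quiver with adjacency matrix
`[[0,1,1,0],[1,0,0,1],[1,0,1,0],[0,1,0,1]]` (summation variables `(l₁,l₂,m,n)`). -/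
theorem schur_A2 (q : ℂ) (hq : ‖q‖ < 1) :
    (∏' j : ℕ, (1 - q ^ (2 * (j + 1)))) ^ 2 *
        (∑' l : ℕ × ℕ,
          q ^ (2 * l.1 + 2 * l.2 + 2 * l.1 * l.2) /
            (qfac q l.1 ^ 2 * qfac q l.2 ^ 2)) =
      ∑' p : ℕ × ℕ × ℕ × ℕ,
        (-q) ^ (p.2.2.1 ^ 2 + p.2.2.2 ^ 2 + 2 * p.2.2.1 * p.1 + 2 * p.2.2.2 * p.2.1 +
              2 * p.1 * p.2.1) *
          q ^ (2 * p.1 + 2 * p.2.1 + p.2.2.1 + p.2.2.2) /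
          (qfac q p.1 * qfac q p.2.1 * qfac q p.2.2.1 * qfac q p.2.2.2) := by
  let e := Equiv.prodAssoc ℕ ℕ (ℕ × ℕ)
  have hs : Summable fun z => quiverTerm q (e z) := e.summable_iff.2 (summable_quiverTerm hq)
  change _ = ∑' p, quiverTerm q p
  rw [← e.tsum_eq, hs.tsum_prod' hs.prod_factor, ← tsum_mul_left]
  refine tsum_congr fun l => ?_
  simp only [e, Equiv.prodAssoc_apply, quiverTerm_eq]
  rw [tsum_mul_left, ← tsum_mul_tsum_of_summable_norm (summable_norm_eulerTerm hq _)
    (summable_norm_eulerTerm hq _), ← tprod_one_sub_pow_div_qfac hq,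
    ← tprod_one_sub_pow_div_qfac hq]
  have h₁ := qfac_ne_zero hq l.1
  have h₂ := qfac_ne_zero hq l.2
  field_simp
end
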